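/- Let K ≥ 7 be an integer, L > 0, 0 < α ≤ 1/(4L), and C_f, M₁, M_f ≥ 0. Let e_0, ..., e_{K−1} ≥ 0 and β_0, ..., β_{K−1} ≥ 0 satisfy β_k ≤ M₁/(k+1) for all k and Σ_{k=0}^{K−1} (α/2 − Lα²) e_k ≤ Σ_{k=0}^{K−1} ( α C_f √(β_k) + L α² β_k ) + M_f. Then (1/K) Σ_{k=0}^{K−1} e_k ≤ 8 C_f √(M₁) · K^{−1/2} + 4 L α M₁ · K^{−1/2} + 4 M_f/(α K). -/

import Mathlib

/-!
Since `α ≤ 1/(4L)`, the coefficient `α/2 - Lα²` is at least `α/4`, so `(α/4) Σ e_k` is bounded by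
the right-hand side of the descent inequality. Inserting `β_k ≤ M₁/(k+1)` reduces that to
`Σ 1/√(k+1) ≤ 2√K` and `Σ 1/(k+1) ≤ √K`, both by telescoping against
`√(k+1) - √k = 1/(√(k+1) + √k)`; the second needs `√(k+1) + √k ≤ k+1`, true for `k ≥ 3`, and
its base case `K = 7` is a numerical check (`363/140 ≤ √7`).
-/

open Finset Real

lemma sqrt_succ_sub_sqrt_mul_add {x : ℝ} (hx : 0 ≤ x) :
    (√(x + 1) - √x) * (√(x + 1) + √x) = 1 := by
  rw [mul_comm, ← sq_sub_sq, sq_sqrt (by linarith), sq_sqrt hx]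
  ring

lemma one_div_sqrt_succ_le_two_mul_sqrt_succ_sub {x : ℝ} (hx : 0 ≤ x) :
    1 / √(x + 1) ≤ 2 * (√(x + 1) - √x) := by
  have hpos : 0 < √(x + 1) := sqrt_pos.mpr (by linarith)
  have hmono : √x ≤ √(x + 1) := sqrt_le_sqrt (by linarith)
  rw [div_le_iff₀ hpos]
  nlinarith [sqrt_succ_sub_sqrt_mul_add hx, sqrt_nonneg x]

lemma one_div_succ_le_sqrt_succ_sub {x : ℝ} (hx : 3 ≤ x) :
    1 / (x + 1) ≤ √(x + 1) - √x := by
  have hmono : √x ≤ √(x + 1) := sqrt_le_sqrt (by linarith)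
  have hhalf : √(x + 1) ≤ (x + 1) / 2 := by
    rw [sqrt_le_left (by linarith)]
    nlinarith
  rw [div_le_iff₀ (by linarith)]
  nlinarith [sqrt_succ_sub_sqrt_mul_add (by linarith : (0 : ℝ) ≤ x), sqrt_nonneg x]

lemma sum_range_one_div_sqrt_succ_le (K : ℕ) :
    ∑ k ∈ range K, 1 / √((k : ℝ) + 1) ≤ 2 * √K := by
  calc ∑ k ∈ range K, 1 / √((k : ℝ) + 1)
      ≤ ∑ k ∈ range K, 2 * (√((k + 1 : ℕ) : ℝ) - √(k : ℝ)) :=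
        sum_le_sum fun k _ => by
          push_cast
          exact one_div_sqrt_succ_le_two_mul_sqrt_succ_sub k.cast_nonneg
    _ = 2 * √K := by
        rw [← mul_sum, sum_range_sub (fun k : ℕ => √(k : ℝ))]
        simp

lemma sum_range_one_div_succ_le_sqrt {K : ℕ} (hK : 7 ≤ K) :
    ∑ k ∈ range K, 1 / ((k : ℝ) + 1) ≤ √K := by
  induction K, hK using Nat.le_induction with
  | base =>
    rw [le_sqrt (by positivity) (by positivity)]
    norm_num [sum_range_succ]
  | succ n hn ih =>
    rw [sum_range_succ]
    have hstep := one_div_succ_le_sqrt_succ_sub (x := n) (by exact_mod_cast (by omega : 3 ≤ n))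
    push_cast
    linarith

lemma sum_sqrt_le_of_le_div_succ {K : ℕ} {M : ℝ} {β : ℕ → ℝ}
    (hβ : ∀ k < K, β k ≤ M / (k + 1)) :
    ∑ k ∈ range K, √(β k) ≤ 2 * √M * √K := by
  calc ∑ k ∈ range K, √(β k)
      ≤ ∑ k ∈ range K, √M * (1 / √((k : ℝ) + 1)) :=
        sum_le_sum fun k hk => by
          rw [mul_one_div, ← sqrt_div' M (by positivity)]
          exact sqrt_le_sqrt (hβ k (mem_range.mp hk))
    _ ≤ 2 * √M * √K := by
        rw [← mul_sum, mul_comm 2, mul_assoc]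
        exact mul_le_mul_of_nonneg_left (sum_range_one_div_sqrt_succ_le K) (sqrt_nonneg M)

lemma sum_le_of_le_div_succ {K : ℕ} (hK : 7 ≤ K) {M : ℝ} (hM : 0 ≤ M) {β : ℕ → ℝ}
    (hβ : ∀ k < K, β k ≤ M / (k + 1)) :
    ∑ k ∈ range K, β k ≤ M * √K := by
  calc ∑ k ∈ range K, β k
      ≤ ∑ k ∈ range K, M * (1 / ((k : ℝ) + 1)) :=
        sum_le_sum fun k hk => by rw [mul_one_div]; exact hβ k (mem_range.mp hk)
    _ ≤ M * √K := by
        rw [← mul_sum]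
        exact mul_le_mul_of_nonneg_left (sum_range_one_div_succ_le_sqrt hK) hM

lemma div_four_le_half_sub_mul_sq {L α : ℝ} (hL : 0 < L) (hα0 : 0 ≤ α)
    (hα : α ≤ 1 / (4 * L)) :
    α / 4 ≤ α / 2 - L * α ^ 2 := by
  have hLα : L * α ≤ 1 / 4 := by
    rw [le_div_iff₀ (by positivity)] at hα
    linarith
  nlinarith

theorem msmd_rate_varying_inner_count_fixed_outer_general
    (K : ℕ) (hK : 7 ≤ K)
    (L α Cf M₁ Mf : ℝ)
    (hL : 0 < L) (hα0 : 0 < α) (hα : α ≤ 1 / (4 * L))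
    (hCf : 0 ≤ Cf) (hM₁ : 0 ≤ M₁)
    (e β : ℕ → ℝ)
    (he : ∀ k < K, 0 ≤ e k)
    (hβ : ∀ k < K, β k ≤ M₁ / (k + 1))
    (hsum : ∑ k ∈ Finset.range K, (α / 2 - L * α ^ 2) * e k ≤
      (∑ k ∈ Finset.range K, (α * Cf * Real.sqrt (β k) + L * α ^ 2 * β k)) + Mf) :
    (1 / K) * ∑ k ∈ Finset.range K, e k ≤
      8 * Cf * Real.sqrt M₁ / Real.sqrt K + 4 * L * α * M₁ / Real.sqrt K
        + 4 * Mf / (α * K) := by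
  have hcoef := div_four_le_half_sub_mul_sq hL hα0.le hα
  have hdescent : α / 4 * ∑ k ∈ range K, e k ≤
      α * Cf * (2 * √M₁ * √K) + L * α ^ 2 * (M₁ * √K) + Mf :=
    calc α / 4 * ∑ k ∈ range K, e k
        ≤ ∑ k ∈ range K, (α / 2 - L * α ^ 2) * e k := by
          rw [mul_sum]
          exact sum_le_sum fun k hk => mul_le_mul_of_nonneg_right hcoef (he k (mem_range.mp hk))
      _ ≤ α * Cf * ∑ k ∈ range K, √(β k) + L * α ^ 2 * ∑ k ∈ range K, β k + Mf := by
          rwa [mul_sum, mul_sum, ← sum_add_distrib]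
      _ ≤ α * Cf * (2 * √M₁ * √K) + L * α ^ 2 * (M₁ * √K) + Mf := by
          gcongr
          · exact sum_sqrt_le_of_le_div_succ hβ
          · exact sum_le_of_le_div_succ hK hM₁ hβ
  have hK0 : (0 : ℝ) < K := by positivity
  have hKsq : √(K : ℝ) * √K = K := mul_self_sqrt hK0.le
  calc (1 / K) * ∑ k ∈ range K, e k = 4 / (α * K) * (α / 4 * ∑ k ∈ range K, e k) := by
        field_simp
    _ ≤ 4 / (α * K) * (α * Cf * (2 * √M₁ * √K) + L * α ^ 2 * (M₁ * √K) + Mf) := by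
        gcongr
    _ = 8 * Cf * √M₁ / √K + 4 * L * α * M₁ / √K + 4 * Mf / (α * K) := by
        field_simp
        linear_combination (8 * Cf * √M₁ * α + 4 * L * α ^ 2 * M₁) * hKsq

/-- Deterministic form of Corollary 4.1(b): with fixed outer step `α ≤ 1/(4L)` and
per-iteration inner error bounds `β k ≤ M₁/(k+1)` (from `S = (k+1)²` inner steps),
for `K ≥ 7` one has
`(1/K) Σ e_k ≤ 8 C_f √M₁ / √K + 4 L α M₁ / √K + 4 M_f/(α K)`. -/
theorem msmd_rate_varying_inner_count_fixed_outer
    (K : ℕ) (hK : 7 ≤ K)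
    (L α Cf M₁ Mf : ℝ)
    (hL : 0 < L) (hα0 : 0 < α) (hα : α ≤ 1 / (4 * L))
    (hCf : 0 ≤ Cf) (hM₁ : 0 ≤ M₁) (hMf : 0 ≤ Mf)
    (e β : ℕ → ℝ)
    (he : ∀ k < K, 0 ≤ e k) (hβ0 : ∀ k < K, 0 ≤ β k)
    (hβ : ∀ k < K, β k ≤ M₁ / (k + 1))
    (hsum : ∑ k ∈ Finset.range K, (α / 2 - L * α ^ 2) * e k ≤
      (∑ k ∈ Finset.range K, (α * Cf * Real.sqrt (β k) + L * α ^ 2 * β k)) + Mf) :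
    (1 / K) * ∑ k ∈ Finset.range K, e k ≤
      8 * Cf * Real.sqrt M₁ / Real.sqrt K + 4 * L * α * M₁ / Real.sqrt K
        + 4 * Mf / (α * K) :=
  msmd_rate_varying_inner_count_fixed_outer_general K hK L α Cf M₁ Mf hL hα0 hα hCf hM₁ e β he hβ
    hsum
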